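/- arXiv:1306.3527 — 3 statements merged into one kernel-verified Lean document; each statement's English description precedes it below -/
import Mathlib

section
/- Let T be a contraction on a Hilbert space H and let h ∈ H satisfy ‖Th‖ ≥ δ‖h‖ for some δ > 0. Then for every μ in the open unit disc, ‖b_μ(T)h‖ ≥ ((δ - |μ|)/(1 + |μ|))‖h‖, where b_μ(T) = (T - μI)(I - conj(μ)T)⁻¹. -/
/-- **Möbius estimate.**  Let `T` be a contraction on a complex Hilbert space `H`
and `h ∈ H` with `‖T h‖ ≥ δ ‖h‖` for some `δ > 0`.  For `μ` in the open unit disc,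
the Blaschke factor `b_μ(T) = (T - μ)(1 - conj μ • T)⁻¹` (here given as an operator
`B` satisfying `B ∘ (1 - conj μ • T) = T - μ • 1`) satisfies
`‖b_μ(T) h‖ ≥ ((δ - |μ|)/(1 + |μ|)) ‖h‖`. -/
theorem stmt0 {H : Type*} [NormedAddCommGroup H] [InnerProductSpace ℂ H]
    (T : H →L[ℂ] H) (hT : ‖T‖ ≤ 1) (h : H) (δ : ℝ) (hδ : 0 < δ)
    (hh : δ * ‖h‖ ≤ ‖T h‖) (μ : ℂ) (hμ : ‖μ‖ < 1)
    (B : H →L[ℂ] H)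
    (hB : B.comp (1 - (starRingEnd ℂ μ) • T) = T - μ • 1) :
    ((δ - ‖μ‖) / (1 + ‖μ‖)) * ‖h‖ ≤ ‖B h‖ := by
  set c : ℂ := starRingEnd ℂ μ with hcdef
  set x : H →L[ℂ] H := c • T with hxdef
  set A : H →L[ℂ] H := 1 - x with hAdef
  set C : H →L[ℂ] H := T - μ • 1 with hCdef
  have hB' : B * A = C := hB
  have hcn : ‖c‖ = ‖μ‖ := RCLike.norm_conj μ
  have hTy : ∀ y : H, ‖T y‖ ≤ ‖y‖ := fun y => by
    calc ‖T y‖ ≤ ‖T‖ * ‖y‖ := T.le_opNorm y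
      _ ≤ 1 * ‖y‖ := by gcongr
      _ = ‖y‖ := one_mul _
  have hxn : ‖x‖ ≤ ‖μ‖ := by
    calc ‖x‖ ≤ ‖c‖ * ‖T‖ := norm_smul_le c T
      _ ≤ ‖μ‖ * 1 := by rw [hcn]; gcongr
      _ = ‖μ‖ := mul_one _
  have hxy : ∀ y : H, ‖x y‖ ≤ ‖μ‖ * ‖y‖ := fun y => by
    calc ‖x y‖ ≤ ‖x‖ * ‖y‖ := x.le_opNorm y
      _ ≤ ‖μ‖ * ‖y‖ := by gcongr
  have hxpow : ∀ (n : ℕ) (y : H), ‖(x ^ n) y‖ ≤ ‖μ‖ ^ n * ‖y‖ := by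
    intro n
    induction n with
    | zero => intro y; simp
    | succ n ih =>
      intro y
      have : (x ^ (n + 1)) y = (x ^ n) (x y) := by
        rw [pow_succ, ContinuousLinearMap.mul_apply]
      rw [this]
      calc ‖(x ^ n) (x y)‖ ≤ ‖μ‖ ^ n * ‖x y‖ := ih (x y)
        _ ≤ ‖μ‖ ^ n * (‖μ‖ * ‖y‖) := by gcongr; exact hxy y
        _ = ‖μ‖ ^ (n + 1) * ‖y‖ := by ring
  -- A commutes with C
  have hcomm : A * C = C * A := by
    have h1 : Commute A T :=
      (Commute.one_left T).sub_left ((Commute.refl T).smul_left c)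
    have h2 : Commute A (μ • (1 : H →L[ℂ] H)) := (Commute.one_right A).smul_right μ
    exact (h1.sub_right h2).eq
  -- key: A (B h) = C h
  have key : A (B h) = C h := by
    set D : H →L[ℂ] H := A * B - C with hDdef
    have hDA : D * A = 0 := by
      have h1 : A * (B * A) = A * C := by rw [hB']
      rw [← mul_assoc] at h1
      rw [hDdef, sub_mul, h1, hcomm, sub_self]
    have hDh : D h = 0 := by
      have hbound : ∀ n : ℕ, ‖D h‖ ≤ ‖D‖ * ‖h‖ * ‖μ‖ ^ n := by
        intro n
        have hg : A * (∑ i ∈ Finset.range n, x ^ i) = 1 - x ^ n := by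
          rw [hAdef]; exact mul_neg_geom_sum x n
        have h2 : D ((1 - x ^ n) h) = 0 := by
          rw [← hg, ← ContinuousLinearMap.mul_apply, ← mul_assoc, hDA, zero_mul,
            ContinuousLinearMap.zero_apply]
        have h3 : D h = D ((x ^ n) h) := by
          have h2' : D h - D ((x ^ n) h) = 0 := by
            rw [← map_sub]
            simpa [ContinuousLinearMap.sub_apply] using h2
          exact sub_eq_zero.mp h2'
        calc ‖D h‖ = ‖D ((x ^ n) h)‖ := by rw [h3]
          _ ≤ ‖D‖ * ‖(x ^ n) h‖ := D.le_opNorm _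
          _ ≤ ‖D‖ * (‖μ‖ ^ n * ‖h‖) := by gcongr; exact hxpow n h
          _ = ‖D‖ * ‖h‖ * ‖μ‖ ^ n := by ring
      have hlim : Filter.Tendsto (fun n : ℕ => ‖D‖ * ‖h‖ * ‖μ‖ ^ n)
          Filter.atTop (nhds 0) := by
        have := tendsto_pow_atTop_nhds_zero_of_lt_one (norm_nonneg μ) hμ
        simpa using this.const_mul (‖D‖ * ‖h‖)
      have hle : ‖D h‖ ≤ 0 := ge_of_tendsto hlim (Filter.Eventually.of_forall hbound)
      exact norm_le_zero_iff.mp hle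
    have : (A * B) h - C h = 0 := by
      simpa [hDdef, ContinuousLinearMap.sub_apply] using hDh
    simpa [ContinuousLinearMap.mul_apply] using sub_eq_zero.mp this
  -- norm estimates
  have hCh : C h = T h - μ • h := by
    simp [hCdef, ContinuousLinearMap.sub_apply]
  have hupper : ‖T h - μ • h‖ ≤ (1 + ‖μ‖) * ‖B h‖ := by
    have hA' : A (B h) = B h - c • T (B h) := by
      simp [hAdef, hxdef, ContinuousLinearMap.sub_apply]
    calc ‖T h - μ • h‖ = ‖B h - c • T (B h)‖ := by rw [← hCh, ← key, hA']
      _ ≤ ‖B h‖ + ‖c • T (B h)‖ := norm_sub_le _ _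
      _ = ‖B h‖ + ‖μ‖ * ‖T (B h)‖ := by rw [norm_smul, hcn]
      _ ≤ ‖B h‖ + ‖μ‖ * ‖B h‖ := by gcongr; exact hTy _
      _ = (1 + ‖μ‖) * ‖B h‖ := by ring
  have hlower : (δ - ‖μ‖) * ‖h‖ ≤ ‖T h - μ • h‖ := by
    calc (δ - ‖μ‖) * ‖h‖ = δ * ‖h‖ - ‖μ‖ * ‖h‖ := by ring
      _ ≤ ‖T h‖ - ‖μ • h‖ := by rw [norm_smul]; linarith
      _ ≤ ‖T h - μ • h‖ := norm_sub_norm_le _ _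
  have hpos : (0:ℝ) < 1 + ‖μ‖ := by positivity
  rw [div_mul_eq_mul_div, div_le_iff₀ hpos]
  calc (δ - ‖μ‖) * ‖h‖ ≤ ‖T h - μ • h‖ := hlower
    _ ≤ (1 + ‖μ‖) * ‖B h‖ := hupper
    _ = ‖B h‖ * (1 + ‖μ‖) := by ring
end

section
/- Let ε > 0 and λ₁, ..., λ_N ∈ ℂ. Then there exists an integer k with 1 ≤ k ≤ N such that the set {λ₁, ..., λ_N} is the disjoint union of E_k = {λ_j : |λ_j - λ₁| < ε·2^{-(N+1-k)}} and F_k = {λ_j : |λ_j - μ| ≥ ε·2^{-(N+1-k)} for every μ ∈ E_k}. -/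
/-- **Combinatorial splitting lemma.**  Given `ε > 0` and complex numbers
`λ₁, …, λ_N` (here `l 0, …, l (N-1)` with `l 0` playing the role of `λ₁`),
there is `1 ≤ k ≤ N` such that `{λ₁, …, λ_N}` is the disjoint union of
`E_k = {λ_j : |λ_j - λ₁| < ε·2^{-(N+1-k)}}` and
`F_k = {λ_j : |λ_j - μ| ≥ ε·2^{-(N+1-k)} for every μ ∈ E_k}`. -/
theorem stmt3 (N : ℕ) (hN : 0 < N) (ε : ℝ) (hε : 0 < ε) (l : Fin N → ℂ) :
    ∃ k : ℕ, 1 ≤ k ∧ k ≤ N ∧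
      (∀ j : Fin N,
        (‖l j - l ⟨0, hN⟩‖ < ε / 2 ^ (N + 1 - k)) ∨
        (∀ i : Fin N, ‖l i - l ⟨0, hN⟩‖ < ε / 2 ^ (N + 1 - k) →
          ε / 2 ^ (N + 1 - k) ≤ ‖l j - l i‖)) ∧
      (∀ j : Fin N,
        ¬((‖l j - l ⟨0, hN⟩‖ < ε / 2 ^ (N + 1 - k)) ∧
          (∀ i : Fin N, ‖l i - l ⟨0, hN⟩‖ < ε / 2 ^ (N + 1 - k) →
            ε / 2 ^ (N + 1 - k) ≤ ‖l j - l i‖))) := by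
  set z := l ⟨0, hN⟩ with hz
  set r : ℕ → ℝ := fun k => ε / 2 ^ (N + 1 - k) with hr
  have hrpos : ∀ k, 0 < r k := fun k => div_pos hε (by positivity)
  -- disjointness always holds
  have hdisj : ∀ k, ∀ j : Fin N,
      ¬((‖l j - z‖ < r k) ∧
        (∀ i : Fin N, ‖l i - z‖ < r k → r k ≤ ‖l j - l i‖)) := by
    intro k j ⟨h1, h2⟩
    have := h2 ⟨0, hN⟩ (by simp [hz, hrpos k])
    simp only [← hz] at this
    linarith
  -- suffices main property
  suffices hmain : ∃ k : ℕ, 1 ≤ k ∧ k ≤ N ∧ ∀ j : Fin N,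
      (‖l j - z‖ < r k) ∨
      (∀ i : Fin N, ‖l i - z‖ < r k → r k ≤ ‖l j - l i‖) by
    obtain ⟨k, h1, h2, h3⟩ := hmain
    exact ⟨k, h1, h2, h3, hdisj k⟩
  by_contra hcon
  push_neg at hcon
  -- hcon : ∀ k, 1 ≤ k → k ≤ N → ∃ j, ¬E ∧ ¬F (as negations)
  set S : ℕ → Finset (Fin N) :=
    fun k => Finset.univ.filter (fun j => ‖l j - z‖ < r k) with hS
  have hmono : ∀ k, k ≤ N → S k ⊆ S (k + 1) := by
    intro k hk j hj
    simp only [hS, Finset.mem_filter, Finset.mem_univ, true_and] at hj ⊢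
    have : r k ≤ r (k + 1) := by
      apply div_le_div_of_nonneg_left hε.le (by positivity)
      exact pow_le_pow_right₀ (by norm_num) (by omega)
    linarith
  have hdouble : ∀ k, k ≤ N → r k + r k = r (k + 1) := by
    intro k hk
    have h1 : N + 1 - k = (N + 1 - (k + 1)) + 1 := by omega
    simp only [hr, h1, pow_succ]
    field_simp
    ring
  have hgrow : ∀ k, 1 ≤ k → k ≤ N + 1 → k ≤ (S k).card := by
    intro k hk1 hk2
    induction k with
    | zero => omega
    | succ n ih =>
      rcases Nat.eq_or_lt_of_le hk1 with h1 | h1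
      · -- n = 0, k = 1 : l 0 ∈ S 1
        obtain rfl : n = 0 := by omega
        have : (⟨0, hN⟩ : Fin N) ∈ S 1 := by
          simp [hS, hz, hrpos 1]
        exact Finset.card_pos.mpr ⟨_, this⟩
      · have hn1 : 1 ≤ n := by omega
        have hnN : n ≤ N := by omega
        obtain ⟨j, hjE, i, hiE, hji⟩ := hcon n hn1 hnN
        have hsub : S n ⊂ S (n + 1) := by
          refine ⟨hmono n hnN, fun hcontra => ?_⟩
          have hj2 : j ∈ S (n + 1) := by
            simp only [hS, Finset.mem_filter, Finset.mem_univ, true_and]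
            calc ‖l j - z‖ ≤ ‖l j - l i‖ + ‖l i - z‖ := by
                  simpa using norm_sub_le_norm_sub_add_norm_sub (l j) (l i) z
              _ < r n + r n := by linarith
              _ = r (n + 1) := hdouble n hnN
          have hj1 : j ∈ S n := hcontra hj2
          simp only [hS, Finset.mem_filter, Finset.mem_univ, true_and] at hj1
          linarith
        have := Finset.card_lt_card hsub
        have := ih (by omega) (by omega)
        omega
  have hfin := hgrow (N + 1) (by omega) le_rfl
  have : (S (N + 1)).card ≤ N := by
    simpa using Finset.card_le_card (Finset.subset_univ (S (N + 1)))
  omega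
end

section
/- Let θ₁, θ₂, u₁, u₂ ∈ H^∞ satisfy θ₁u₁ + θ₂u₂ = 1, and let T be a completely non-unitary contraction of class C₀ with minimal function θ₁θ₂ (where θ₁, θ₂ are inner). Define X : H → ker θ₁(T) ⊕ ker θ₂(T) by Xf = (θ₂u₂)(T)f ⊕ (θ₁u₁)(T)f. Then X is invertible, XT = (T|ker θ₁(T) ⊕ T|ker θ₂(T))X, ‖X‖ ≤ (‖u₁‖²_{H^∞} + ‖u₂‖²_{H^∞})^{1/2}, and ‖X⁻¹‖ ≤ √2. -/
/-!
The Bezout identity makes `P₁ = (θ₂u₂)(T)` and `P₂ = (θ₁u₁)(T)` a resolution of the identity,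
`P₁ + P₂ = 1`. Since `θ₁θ₂` annihilates the calculus, `P₁` maps into `ker θ₁(T)`, `P₂` into
`ker θ₂(T)`, and each `Pᵢ` kills the other kernel; hence `f = P₁ f + P₂ f` inverts `X`, which
gives `‖X⁻¹‖ ≤ √2`, while `‖(θⱼuⱼ)(T)‖ ≤ ‖θⱼ‖ ‖uⱼ‖ ≤ ‖uⱼ‖` gives the bound on `‖X‖`.
-/

namespace AlgHom

variable {𝕜 A E : Type*} [NontriviallyNormedField 𝕜] [NormedAddCommGroup E] [NormedSpace 𝕜 E]

section CommRing

variable [CommRing A] [Algebra 𝕜 A] (Φ : A →ₐ[𝕜] (E →L[𝕜] E))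

theorem apply_add_apply_of_add_eq_one {a b : A} (hab : a + b = 1) (f : E) :
    Φ a f + Φ b f = f := by
  change (Φ a + Φ b) f = f
  rw [← map_add, hab, map_one]
  rfl

theorem apply_mem_ker_of_map_mul_eq_zero {θ a : A} (h : Φ (θ * a) = 0) (f : E) :
    Φ a f ∈ LinearMap.ker (Φ θ : E →ₗ[𝕜] E) := by
  change (Φ θ * Φ a) f = 0
  rw [← map_mul, h]
  rfl

theorem map_mul_apply_eq_zero_of_mem_ker {θ u : A} {g : E}
    (hg : g ∈ LinearMap.ker (Φ θ : E →ₗ[𝕜] E)) : Φ (θ * u) g = 0 := by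
  rw [mul_comm, map_mul]
  exact (congrArg (Φ u) hg).trans (map_zero _)

end CommRing

theorem norm_map_mul_apply_le [NormedRing A] [Algebra 𝕜 A]
    (Φ : A →ₐ[𝕜] (E →L[𝕜] E)) (hΦ : ∀ a, ‖Φ a‖ ≤ ‖a‖) {θ : A} (hθ : ‖θ‖ ≤ 1) (u : A) (f : E) :
    ‖Φ (θ * u) f‖ ≤ ‖u‖ * ‖f‖ :=
  calc ‖Φ (θ * u) f‖ ≤ ‖θ * u‖ * ‖f‖ := (Φ _).le_of_opNorm_le (hΦ _) f
    _ ≤ ‖θ‖ * ‖u‖ * ‖f‖ := by gcongr; exact norm_mul_le _ _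
    _ ≤ ‖u‖ * ‖f‖ := by gcongr; exact mul_le_of_le_one_left (norm_nonneg _) hθ

end AlgHom

open AlgHom in
theorem stmt4_general {A : Type*} [NormedCommRing A] [NormedAlgebra ℂ A]
    {H : Type*} [NormedAddCommGroup H] [InnerProductSpace ℂ H]
    (Φ : A →ₐ[ℂ] (H →L[ℂ] H)) (hΦ : ∀ a : A, ‖Φ a‖ ≤ ‖a‖)
    (T : H →L[ℂ] H) (hTc : ∀ a : A, Commute T (Φ a))
    (θ₁ θ₂ u₁ u₂ : A) (hθ₁ : ‖θ₁‖ ≤ 1) (hθ₂ : ‖θ₂‖ ≤ 1)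
    (hmin : ∀ a : A, Φ a = 0 ↔ θ₁ * θ₂ ∣ a)
    (hbez : θ₁ * u₁ + θ₂ * u₂ = 1) :
    (∀ f : H, Φ (θ₂ * u₂) f ∈ LinearMap.ker (Φ θ₁ : H →ₗ[ℂ] H) ∧
      Φ (θ₁ * u₁) f ∈ LinearMap.ker (Φ θ₂ : H →ₗ[ℂ] H)) ∧
    Function.Injective (fun f : H => (Φ (θ₂ * u₂) f, Φ (θ₁ * u₁) f)) ∧
    (∀ g₁ ∈ LinearMap.ker (Φ θ₁ : H →ₗ[ℂ] H), ∀ g₂ ∈ LinearMap.ker (Φ θ₂ : H →ₗ[ℂ] H),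
      ∃ f : H, Φ (θ₂ * u₂) f = g₁ ∧ Φ (θ₁ * u₁) f = g₂) ∧
    (∀ f : H, Φ (θ₂ * u₂) (T f) = T (Φ (θ₂ * u₂) f) ∧
      Φ (θ₁ * u₁) (T f) = T (Φ (θ₁ * u₁) f)) ∧
    (∀ f : H, ‖Φ (θ₂ * u₂) f‖ ^ 2 + ‖Φ (θ₁ * u₁) f‖ ^ 2 ≤
      (‖u₁‖ ^ 2 + ‖u₂‖ ^ 2) * ‖f‖ ^ 2) ∧
    (∀ f : H, ‖f‖ ^ 2 ≤ 2 * (‖Φ (θ₂ * u₂) f‖ ^ 2 + ‖Φ (θ₁ * u₁) f‖ ^ 2)) := by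
  have hsum := apply_add_apply_of_add_eq_one Φ ((add_comm _ _).trans hbez)
  have hT (a : A) (f : H) : Φ a (T f) = T (Φ a f) := (DFunLike.congr_fun (hTc a).eq f).symm
  refine ⟨fun f => ⟨?_, ?_⟩, fun f g hfg => ?_, fun g₁ hg₁ g₂ hg₂ => ⟨g₁ + g₂, ?_, ?_⟩,
    fun f => ⟨hT _ f, hT _ f⟩, fun f => ?_, fun f => ?_⟩
  · exact apply_mem_ker_of_map_mul_eq_zero Φ ((hmin _).2 ⟨u₂, by ring⟩) f
  · exact apply_mem_ker_of_map_mul_eq_zero Φ ((hmin _).2 ⟨u₁, by ring⟩) f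
  · obtain ⟨h₁, h₂⟩ := Prod.mk.inj hfg
    rw [← hsum f, ← hsum g, h₁, h₂]
  · have h := hsum g₁
    rw [map_mul_apply_eq_zero_of_mem_ker Φ hg₁, add_zero] at h
    rw [map_add, h, map_mul_apply_eq_zero_of_mem_ker Φ hg₂, add_zero]
  · have h := hsum g₂
    rw [map_mul_apply_eq_zero_of_mem_ker Φ hg₂, zero_add] at h
    rw [map_add, h, map_mul_apply_eq_zero_of_mem_ker Φ hg₁, zero_add]
  · have h₁ := norm_map_mul_apply_le Φ hΦ hθ₁ u₁ f
    have h₂ := norm_map_mul_apply_le Φ hΦ hθ₂ u₂ f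
    calc ‖Φ (θ₂ * u₂) f‖ ^ 2 + ‖Φ (θ₁ * u₁) f‖ ^ 2 ≤ (‖u₂‖ * ‖f‖) ^ 2 + (‖u₁‖ * ‖f‖) ^ 2 := by
          gcongr
      _ = (‖u₁‖ ^ 2 + ‖u₂‖ ^ 2) * ‖f‖ ^ 2 := by ring
  · calc ‖f‖ ^ 2 ≤ (‖Φ (θ₂ * u₂) f‖ + ‖Φ (θ₁ * u₁) f‖) ^ 2 := by
          gcongr
          exact (congrArg norm (hsum f)).symm.trans_le (norm_add_le _ _)
      _ ≤ _ := add_sq_le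

/-- **Corona similarity lemma.**  Let `A` be a model of `H^∞` (a commutative normed
algebra), `Φ` the contractive `H^∞` functional calculus of a completely non-unitary
contraction `T` of class `C₀` with minimal function `θ₁θ₂` (`θ₁, θ₂` inner, so of norm
at most `1`), and suppose `θ₁u₁ + θ₂u₂ = 1`.  Then the operator
`X f = (θ₂u₂)(T) f ⊕ (θ₁u₁)(T) f` maps `H` into `ker θ₁(T) ⊕ ker θ₂(T)`, is bijective
onto it, intertwines `T` with `T|ker θ₁(T) ⊕ T|ker θ₂(T)`, and (with the `ℓ²` norm on
the direct sum) satisfies `‖X‖ ≤ (‖u₁‖² + ‖u₂‖²)^{1/2}` and `‖X⁻¹‖ ≤ √2`. -/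
theorem stmt4 {A : Type*} [NormedCommRing A] [NormedAlgebra ℂ A]
    {H : Type*} [NormedAddCommGroup H] [InnerProductSpace ℂ H] [CompleteSpace H]
    (Φ : A →ₐ[ℂ] (H →L[ℂ] H)) (hΦ : ∀ a : A, ‖Φ a‖ ≤ ‖a‖)
    (T : H →L[ℂ] H) (hT : ‖T‖ ≤ 1) (hTc : ∀ a : A, Commute T (Φ a))
    (θ₁ θ₂ u₁ u₂ : A) (hθ₁ : ‖θ₁‖ ≤ 1) (hθ₂ : ‖θ₂‖ ≤ 1)
    (hmin : ∀ a : A, Φ a = 0 ↔ θ₁ * θ₂ ∣ a)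
    (hbez : θ₁ * u₁ + θ₂ * u₂ = 1) :
    (∀ f : H, Φ (θ₂ * u₂) f ∈ LinearMap.ker (Φ θ₁ : H →ₗ[ℂ] H) ∧
      Φ (θ₁ * u₁) f ∈ LinearMap.ker (Φ θ₂ : H →ₗ[ℂ] H)) ∧
    Function.Injective (fun f : H => (Φ (θ₂ * u₂) f, Φ (θ₁ * u₁) f)) ∧
    (∀ g₁ ∈ LinearMap.ker (Φ θ₁ : H →ₗ[ℂ] H), ∀ g₂ ∈ LinearMap.ker (Φ θ₂ : H →ₗ[ℂ] H),
      ∃ f : H, Φ (θ₂ * u₂) f = g₁ ∧ Φ (θ₁ * u₁) f = g₂) ∧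
    (∀ f : H, Φ (θ₂ * u₂) (T f) = T (Φ (θ₂ * u₂) f) ∧
      Φ (θ₁ * u₁) (T f) = T (Φ (θ₁ * u₁) f)) ∧
    (∀ f : H, ‖Φ (θ₂ * u₂) f‖ ^ 2 + ‖Φ (θ₁ * u₁) f‖ ^ 2 ≤
      (‖u₁‖ ^ 2 + ‖u₂‖ ^ 2) * ‖f‖ ^ 2) ∧
    (∀ f : H, ‖f‖ ^ 2 ≤ 2 * (‖Φ (θ₂ * u₂) f‖ ^ 2 + ‖Φ (θ₁ * u₁) f‖ ^ 2)) :=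
  stmt4_general Φ hΦ T hTc θ₁ θ₂ u₁ u₂ hθ₁ hθ₂ hmin hbez
end
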